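/- Assume the standard scarred-sequence setting and suppose additionally given: for each N and each i ∈ I_N, a self-adjoint linear operator h_{N,i} on the M_N-qudit space supported on X_{N,i} with operator norm ‖h_{N,i}‖ ≤ C_h (C_h a constant independent of N and i); a depth D ∈ ℕ independent of N; and for each N, subsets L_{N,1}, …, L_{N,D} ⊆ I_N such that within each layer ℓ the supports X_{N,i} for i ∈ L_{N,ℓ} are pairwise disjoint. Define the circuit unitary U_N = exp(√−1 · H_N^{(D)}) ∘ ⋯ ∘ exp(√−1 · H_N^{(1)}), where H_N^{(ℓ)} = Σ_{i∈L_{N,ℓ}} P_{N,i} ∘ h_{N,i} ∘ P_{N,i}. Then ‖U_N A_N − A_N‖ → 0 as N → ∞. -/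

import Mathlib

open Filter
open scoped BigOperators

noncomputable section

/-- The `M`-qudit space: complex functions on configurations `Fin M → Fin d`,
with the standard (Euclidean) inner product. -/
abbrev QuditSpace (d M : ℕ) : Type := EuclideanSpace ℂ (Fin M → Fin d)

/-- The computational basis vector indexed by the configuration `s`. -/
def basisVec {d M : ℕ} (s : Fin M → Fin d) : QuditSpace d M :=
  EuclideanSpace.single s 1

/-- The matrix element `⟨e_s, T e_t⟩` of an operator `T` on the qudit space. -/
def matElem {d M : ℕ} (T : QuditSpace d M →L[ℂ] QuditSpace d M)
    (s t : Fin M → Fin d) : ℂ :=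
  inner ℂ (basisVec s) (T (basisVec t))

/-- `T` is supported on the set of sites `X`: its matrix elements vanish whenever the two
configurations differ at a site outside `X`, and (among configuration pairs agreeing
outside `X`) they depend only on the restrictions of the configurations to `X`. -/
def SupportedOn {d M : ℕ} (X : Finset (Fin M))
    (T : QuditSpace d M →L[ℂ] QuditSpace d M) : Prop :=
  (∀ s t : Fin M → Fin d, (∃ j ∉ X, s j ≠ t j) → matElem T s t = 0) ∧
  (∀ s t s' t' : Fin M → Fin d,
      (∀ j ∈ X, s j = s' j) → (∀ j ∈ X, t j = t' j) →
      (∀ j ∉ X, s j = t j) → (∀ j ∉ X, s' j = t' j) →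
      matElem T s t = matElem T s' t')

/-- An orthogonal projection: a self-adjoint idempotent operator. -/
def IsOrthProj {d M : ℕ} (P : QuditSpace d M →L[ℂ] QuditSpace d M) : Prop :=
  (∀ v w : QuditSpace d M, (inner ℂ (P v) w : ℂ) = inner ℂ v (P w)) ∧ P ∘L P = P


/-!
Within one layer the projections `P i` have disjoint supports, hence commute, so
`Z = ∏ i, (1 - P i)` is annihilated by every `P i` and therefore by the layer Hamiltonian `H`.
Thus `exp (i H)` fixes `Z A`, and since it is unitary, `‖exp (i H) A - A‖ ≤ 2 ‖A - Z A‖`.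
Peeling off one factor `1 - P i` at a time splits `A - Z A` into orthogonal pieces, which gives
`‖A - Z A‖² ≤ ∑ i, ‖P i A‖² = Re ⟪A, (∑ i, P i) A⟫ ≤ ‖(∑ i, P i) A‖`.
A product of contractions moves `A` by at most the sum of the distances each factor moves it,
so the whole depth-`D` circuit moves `A_N` by at most `2 D √‖(∑ i, P_{N,i}) A_N‖ → 0`.
-/

section StarProjection

variable {𝕜 E : Type*} [RCLike 𝕜] [NormedAddCommGroup E] [InnerProductSpace 𝕜 E]
  [CompleteSpace E] {p : E →L[𝕜] E}

open scoped InnerProductSpace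

namespace IsStarProjection

lemma inner_apply_left (hp : IsStarProjection p) (v w : E) : ⟪p v, w⟫_𝕜 = ⟪v, p w⟫_𝕜 :=
  hp.isSelfAdjoint.isSymmetric v w

lemma norm_apply_sq (hp : IsStarProjection p) (v : E) : ‖p v‖ ^ 2 = RCLike.re ⟪v, p v⟫_𝕜 := by
  rw [← inner_self_eq_norm_sq (𝕜 := 𝕜), hp.inner_apply_left, ← mul_apply_eq_comp,
    hp.isIdempotentElem.eq]

lemma norm_apply_le (hp : IsStarProjection p) (v : E) : ‖p v‖ ≤ ‖v‖ :=
  (p.le_of_opNorm_le hp.norm_le v).trans_eq (one_mul _)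

lemma norm_apply_add_one_sub_apply_sq_le (hp : IsStarProjection p) (v w : E) :
    ‖p v + (1 - p) w‖ ^ 2 ≤ ‖p v‖ ^ 2 + ‖w‖ ^ 2 := by
  have horth : ⟪p v, (1 - p) w⟫_𝕜 = 0 := by
    rw [hp.inner_apply_left, ← mul_apply_eq_comp, hp.mul_one_sub_self, zero_apply,
      inner_zero_right]
  rw [sq, sq, sq, norm_add_sq_eq_norm_sq_add_norm_sq_of_inner_eq_zero _ _ horth]
  gcongr <;> exact hp.one_sub.norm_apply_le w

end IsStarProjection

variable {ι : Type*} {P : ι → E →L[𝕜] E}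

lemma sum_norm_apply_sq_le (s : Finset ι) (hP : ∀ i ∈ s, IsStarProjection (P i)) (v : E) :
    ∑ i ∈ s, ‖P i v‖ ^ 2 ≤ ‖v‖ * ‖(∑ i ∈ s, P i) v‖ :=
  calc ∑ i ∈ s, ‖P i v‖ ^ 2 = RCLike.re ⟪v, (∑ i ∈ s, P i) v⟫_𝕜 := by
        rw [sum_apply, inner_sum, map_sum]
        exact Finset.sum_congr rfl fun i hi => (hP i hi).norm_apply_sq v
    _ ≤ ‖v‖ * ‖(∑ i ∈ s, P i) v‖ := re_inner_le_norm _ _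

lemma exists_mul_eq_zero_and_norm_sub_apply_sq_le (s : Finset ι)
    (hP : ∀ i ∈ s, IsStarProjection (P i))
    (hcomm : (s : Set ι).Pairwise fun i j => Commute (P i) (P j)) :
    ∃ Z : E →L[𝕜] E, (∀ i ∈ s, P i * Z = 0) ∧ ∀ v, ‖v - Z v‖ ^ 2 ≤ ∑ i ∈ s, ‖P i v‖ ^ 2 := by
  classical
  induction s using Finset.induction_on with
  | empty => exact ⟨1, by simp, fun v => by simp⟩
  | insert j s hj ih =>
    obtain ⟨Z, hPZ, hnorm⟩ := ih (fun i hi => hP i (Finset.mem_insert_of_mem hi))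
      (hcomm.mono (by simp))
    have hPj := hP j (Finset.mem_insert_self j s)
    refine ⟨(1 - P j) * Z, fun i hi => ?_, fun v => ?_⟩
    · rcases Finset.mem_insert.mp hi with rfl | hi
      · rw [← mul_assoc, hPj.mul_one_sub_self, zero_mul]
      · have hij : Commute (P i) (1 - P j) := (Commute.one_right _).sub_right
          (hcomm (by simp [hi]) (by simp) (ne_of_mem_of_not_mem hi hj))
        rw [← mul_assoc, hij.eq, mul_assoc, hPZ i hi, mul_zero]
    · have hsplit : v - ((1 - P j) * Z) v = P j v + (1 - P j) (v - Z v) := by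
        simp only [mul_apply_eq_comp, sub_apply, one_apply_eq_self, map_sub]
        abel
      calc ‖v - ((1 - P j) * Z) v‖ ^ 2 ≤ ‖P j v‖ ^ 2 + ‖v - Z v‖ ^ 2 :=
            hsplit ▸ hPj.norm_apply_add_one_sub_apply_sq_le _ _
        _ ≤ ∑ i ∈ insert j s, ‖P i v‖ ^ 2 := by
            rw [Finset.sum_insert hj]
            gcongr
            exact hnorm v

end StarProjection

lemma ContinuousLinearMap.norm_list_prod_apply_sub_le {𝕜 E : Type*} [NontriviallyNormedField 𝕜]
    [SeminormedAddCommGroup E] [NormedSpace 𝕜 E] (l : List (E →L[𝕜] E))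
    (hl : ∀ f ∈ l, ‖f‖ ≤ 1) (v : E) :
    ‖l.prod v - v‖ ≤ (l.map fun f => ‖f v - v‖).sum := by
  induction l with
  | nil => simp
  | cons f l ih =>
    have hf : ‖f (l.prod v - v)‖ ≤ ‖l.prod v - v‖ :=
      (f.le_of_opNorm_le (hl f List.mem_cons_self) _).trans_eq (one_mul _)
    calc ‖(f :: l).prod v - v‖ = ‖f (l.prod v - v) + (f v - v)‖ := by
          rw [List.prod_cons, mul_apply_eq_comp, map_sub, sub_add_sub_cancel]
      _ ≤ ‖l.prod v - v‖ + ‖f v - v‖ := norm_add_le_of_le hf le_rfl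
      _ ≤ (l.map fun f => ‖f v - v‖).sum + ‖f v - v‖ := by
          gcongr
          exact ih fun g hg => hl g (List.mem_cons_of_mem f hg)
      _ = ((f :: l).map fun f => ‖f v - v‖).sum := by
          rw [List.map_cons, List.sum_cons, add_comm]

lemma NormedSpace.exp_mul_of_mul_eq_zero {𝔸 : Type*} [NormedRing 𝔸] [NormedAlgebra ℚ 𝔸]
    [CompleteSpace 𝔸] {a z : 𝔸} (h : a * z = 0) : exp a * z = z := by
  have hsemiconj : SemiconjBy z 0 a := by rw [SemiconjBy, mul_zero, h]
  simpa using hsemiconj.exp_right.eq.symm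

section Circuit

variable {E : Type*} [NormedAddCommGroup E] [InnerProductSpace ℂ E] [CompleteSpace E]
  {ι : Type*} {P h : ι → E →L[ℂ] E}

lemma norm_exp_I_smul_le_one {H : E →L[ℂ] E} (hH : IsSelfAdjoint H) :
    ‖NormedSpace.exp (Complex.I • H)‖ ≤ 1 := by
  let : NormedAlgebra ℚ (E →L[ℂ] E) := .restrictScalars ℚ ℂ (E →L[ℂ] E)
  have hU :=
    NormedSpace.exp_mem_unitary_of_mem_skewAdjoint (hH.smul_mem_skewAdjoint Complex.conj_I)
  exact ContinuousLinearMap.opNorm_le_bound _ zero_le_one fun v => by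
    rw [ContinuousLinearMap.norm_map_of_mem_unitary hU, one_mul]

lemma isSelfAdjoint_sum_comp_comp (s : Finset ι) (hP : ∀ i ∈ s, IsSelfAdjoint (P i))
    (hh : ∀ i ∈ s, IsSelfAdjoint (h i)) : IsSelfAdjoint (∑ i ∈ s, P i ∘L h i ∘L P i) :=
  isSelfAdjoint_sum s fun i hi => (hh i hi).conjugate_self (hP i hi)

lemma norm_exp_I_smul_sum_apply_sub_le (s : Finset ι) (hP : ∀ i ∈ s, IsStarProjection (P i))
    (hcomm : (s : Set ι).Pairwise fun i j => Commute (P i) (P j))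
    (hh : ∀ i ∈ s, IsSelfAdjoint (h i)) (v : E) :
    ‖NormedSpace.exp (Complex.I • ∑ i ∈ s, P i ∘L h i ∘L P i) v - v‖ ≤
      2 * √(∑ i ∈ s, ‖P i v‖ ^ 2) := by
  let : NormedAlgebra ℚ (E →L[ℂ] E) := .restrictScalars ℚ ℂ (E →L[ℂ] E)
  obtain ⟨Z, hPZ, hnorm⟩ := exists_mul_eq_zero_and_norm_sub_apply_sq_le s hP hcomm
  set H := ∑ i ∈ s, P i ∘L h i ∘L P i
  set U := NormedSpace.exp (Complex.I • H)
  have hHZ : H * Z = 0 := by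
    refine Finset.sum_mul s _ Z ▸ Finset.sum_eq_zero fun i hi => ?_
    rw [← ContinuousLinearMap.mul_def, ← ContinuousLinearMap.mul_def, mul_assoc, mul_assoc,
      hPZ i hi, mul_zero, mul_zero]
  have hUZ : U * Z = Z :=
    NormedSpace.exp_mul_of_mul_eq_zero (by rw [smul_mul_assoc, hHZ, smul_zero])
  have hU : ‖U‖ ≤ 1 := norm_exp_I_smul_le_one
    (isSelfAdjoint_sum_comp_comp s (fun i hi => (hP i hi).isSelfAdjoint) hh)
  calc ‖U v - v‖ = ‖U (v - Z v) - (v - Z v)‖ := by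
        rw [map_sub, ← mul_apply_eq_comp, hUZ, sub_sub_sub_cancel_right]
    _ ≤ ‖v - Z v‖ + ‖v - Z v‖ :=
        norm_sub_le_of_le ((U.le_of_opNorm_le hU _).trans_eq (one_mul _)) le_rfl
    _ ≤ 2 * √(∑ i ∈ s, ‖P i v‖ ^ 2) := by
        rw [← two_mul]
        gcongr
        exact Real.le_sqrt_of_sq_le (hnorm v)

theorem norm_circuit_apply_sub_le [Fintype ι] {D : ℕ} (L : Fin D → Finset ι)
    (hP : ∀ i, IsStarProjection (P i)) (hh : ∀ i, IsSelfAdjoint (h i))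
    (hcomm : ∀ ℓ, (L ℓ : Set ι).Pairwise fun i j => Commute (P i) (P j)) {v : E} (hv : ‖v‖ ≤ 1) :
    ‖(List.ofFn fun ℓ : Fin D =>
        NormedSpace.exp (Complex.I • ∑ i ∈ L ℓ, P i ∘L h i ∘L P i)).reverse.prod v - v‖ ≤
      2 * D * √‖(∑ i, P i) v‖ := by
  have hlayer (ℓ : Fin D) :
      ‖NormedSpace.exp (Complex.I • ∑ i ∈ L ℓ, P i ∘L h i ∘L P i) v - v‖ ≤
        2 * √‖(∑ i, P i) v‖ := by
    refine (norm_exp_I_smul_sum_apply_sub_le (L ℓ) (fun i _ => hP i) (hcomm ℓ)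
      (fun i _ => hh i) v).trans ?_
    gcongr
    calc ∑ i ∈ L ℓ, ‖P i v‖ ^ 2 ≤ ∑ i, ‖P i v‖ ^ 2 :=
          Finset.sum_le_univ_sum_of_nonneg fun i => sq_nonneg _
      _ ≤ ‖v‖ * ‖(∑ i, P i) v‖ := sum_norm_apply_sq_le _ (fun i _ => hP i) v
      _ ≤ ‖(∑ i, P i) v‖ := mul_le_of_le_one_left (norm_nonneg _) hv
  calc _ ≤ ((List.ofFn fun ℓ : Fin D => NormedSpace.exp (Complex.I • ∑ i ∈ L ℓ,
          P i ∘L h i ∘L P i)).reverse.map fun f => ‖f v - v‖).sum :=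
        ContinuousLinearMap.norm_list_prod_apply_sub_le _ (by
          simpa using fun ℓ => norm_exp_I_smul_le_one
            (isSelfAdjoint_sum_comp_comp (L ℓ) (fun i _ => (hP i).isSelfAdjoint)
              fun i _ => hh i)) v
    _ = ∑ ℓ, ‖NormedSpace.exp (Complex.I • ∑ i ∈ L ℓ, P i ∘L h i ∘L P i) v - v‖ := by
        rw [List.map_reverse, List.sum_reverse, List.map_ofFn, List.sum_ofFn]
        rfl
    _ ≤ ∑ _ℓ : Fin D, 2 * √‖(∑ i, P i) v‖ := Finset.sum_le_sum fun ℓ _ => hlayer ℓ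
    _ = 2 * D * √‖(∑ i, P i) v‖ := by
        rw [Finset.sum_const, Finset.card_univ, Fintype.card_fin, nsmul_eq_mul]; ring

end Circuit

section Qudit

variable {d M : ℕ}

lemma basisVec_eq_basisFun (s : Fin M → Fin d) :
    basisVec s = EuclideanSpace.basisFun (Fin M → Fin d) ℂ s :=
  (EuclideanSpace.basisFun_apply _ _ s).symm

lemma matElem_comp (T S : QuditSpace d M →L[ℂ] QuditSpace d M) (s t : Fin M → Fin d) :
    matElem (T ∘L S) s t = ∑ u, matElem T s u * matElem S u t := by
  simp only [matElem, basisVec_eq_basisFun, ContinuousLinearMap.comp_apply,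
    ← ContinuousLinearMap.adjoint_inner_left T]
  exact ((EuclideanSpace.basisFun _ ℂ).sum_inner_mul_inner _ _).symm

lemma ext_matElem {T S : QuditSpace d M →L[ℂ] QuditSpace d M}
    (h : ∀ s t, matElem T s t = matElem S s t) : T = S := by
  let b := (EuclideanSpace.basisFun (Fin M → Fin d) ℂ).toBasis
  refine ContinuousLinearMap.coe_injective
    (b.ext fun t => InnerProductSpace.ext_inner_left_basis b fun s => ?_)
  simpa [b, matElem, basisVec_eq_basisFun] using h s t

lemma IsOrthProj.isStarProjection {P : QuditSpace d M →L[ℂ] QuditSpace d M}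
    (hP : IsOrthProj P) : IsStarProjection P where
  isIdempotentElem := hP.2
  isSelfAdjoint := LinearMap.IsSymmetric.isSelfAdjoint hP.1

end Qudit

namespace SupportedOn

variable {d M : ℕ} {X Y : Finset (Fin M)} {T S : QuditSpace d M →L[ℂ] QuditSpace d M}

lemma eq_of_matElem_ne_zero (hT : SupportedOn X T) {s t : Fin M → Fin d}
    (h : matElem T s t ≠ 0) {j : Fin M} (hj : j ∉ X) : s j = t j := by
  by_contra hne
  exact h (hT.1 s t ⟨j, hj, hne⟩)

lemma matElem_comp_eq_zero (hT : SupportedOn X T) (hS : SupportedOn Y S)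
    {s t : Fin M → Fin d} {j : Fin M} (hjX : j ∉ X) (hjY : j ∉ Y) (hst : s j ≠ t j) :
    matElem (T ∘L S) s t = 0 := by
  rw [matElem_comp]
  refine Finset.sum_eq_zero fun u _ => ?_
  by_contra h
  obtain ⟨hsu, hut⟩ := mul_ne_zero_iff.mp h
  exact hst ((hT.eq_of_matElem_ne_zero hsu hjX).trans (hS.eq_of_matElem_ne_zero hut hjY))

lemma matElem_comp_of_disjoint (hT : SupportedOn X T) (hS : SupportedOn Y S)
    (hXY : Disjoint X Y) (s t : Fin M → Fin d) :
    matElem (T ∘L S) s t = matElem T s (X.piecewise t s) * matElem S (X.piecewise t s) t := by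
  rw [matElem_comp]
  refine Finset.sum_eq_single _ (fun u _ hu => ?_) (by simp)
  by_contra h
  obtain ⟨hsu, hut⟩ := mul_ne_zero_iff.mp h
  refine hu (funext fun j => ?_)
  by_cases hj : j ∈ X
  · rw [Finset.piecewise_eq_of_mem _ _ _ hj]
    exact hS.eq_of_matElem_ne_zero hut (Finset.disjoint_left.mp hXY hj)
  · rw [Finset.piecewise_eq_of_notMem _ _ _ hj]
    exact (hT.eq_of_matElem_ne_zero hsu hj).symm

lemma matElem_piecewise (hT : SupportedOn X T) (hXY : Disjoint X Y) {s t : Fin M → Fin d}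
    (hst : ∀ j ∉ X, j ∉ Y → s j = t j) :
    matElem T s (X.piecewise t s) = matElem T (Y.piecewise t s) t := by
  refine hT.2 _ _ _ _ (fun j hj => ?_) (fun j hj => ?_) (fun j hj => ?_) (fun j hj => ?_)
  · simp [Finset.disjoint_left.mp hXY hj]
  · simp [hj]
  · simp [hj]
  · by_cases hjY : j ∈ Y
    · simp [hjY]
    · simpa [hjY] using hst j hj hjY

theorem commute_of_disjoint (hT : SupportedOn X T) (hS : SupportedOn Y S)
    (hXY : Disjoint X Y) : Commute T S := by
  refine ext_matElem fun s t => ?_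
  by_cases hst : ∀ j ∉ X, j ∉ Y → s j = t j
  · rw [ContinuousLinearMap.mul_def, ContinuousLinearMap.mul_def,
      hT.matElem_comp_of_disjoint hS hXY, hS.matElem_comp_of_disjoint hT hXY.symm,
      hT.matElem_piecewise hXY hst, hS.matElem_piecewise hXY.symm fun j hY hX => hst j hX hY,
      mul_comm]
  · push Not at hst
    obtain ⟨j, hjX, hjY, hne⟩ := hst
    rw [ContinuousLinearMap.mul_def, ContinuousLinearMap.mul_def,
      hT.matElem_comp_eq_zero hS hjX hjY hne, hS.matElem_comp_eq_zero hT hjY hjX hne]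

end SupportedOn

theorem circuit_asymptotically_fixes_general
    (d : ℕ)
    (M : ℕ → ℕ) (I : ℕ → Type) [∀ N, Fintype (I N)]
    (X : ∀ N, I N → Finset (Fin (M N)))
    (P : ∀ N, (i : I N) → QuditSpace d (M N) →L[ℂ] QuditSpace d (M N))
    (A : ∀ N, QuditSpace d (M N))
    (hproj : ∀ N (i : I N), IsOrthProj (P N i))
    (hsupp : ∀ N (i : I N), SupportedOn (X N i) (P N i))
    (hA : ∀ N, ‖A N‖ = 1)
    (hlim : Tendsto (fun N => ‖(∑ i : I N, P N i) (A N)‖) atTop (nhds 0))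
    (h : ∀ N, (i : I N) → QuditSpace d (M N) →L[ℂ] QuditSpace d (M N))
    (hhsa : ∀ N (i : I N), ∀ v w : QuditSpace d (M N),
      (inner ℂ ((h N i) v) w : ℂ) = inner ℂ v ((h N i) w))
    (D : ℕ) (L : ∀ N, Fin D → Finset (I N))
    (hLdisj : ∀ N (ℓ : Fin D), ∀ i ∈ L N ℓ, ∀ i' ∈ L N ℓ, i ≠ i' → Disjoint (X N i) (X N i'))
 :
    Tendsto (fun N =>
        ‖(((List.ofFn fun ℓ : Fin D =>
          NormedSpace.exp (Complex.I •
            (∑ i ∈ L N ℓ, (P N i) ∘L (h N i) ∘L (P N i)))).reverse).prod) (A N) - A N‖)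
      atTop (nhds 0) := by
  have hcomm (N : ℕ) (ℓ : Fin D) :
      (L N ℓ : Set (I N)).Pairwise fun i j => Commute (P N i) (P N j) :=
    fun i hi j hj hij => (hsupp N i).commute_of_disjoint (hsupp N j) (hLdisj N ℓ i hi j hj hij)
  have hbound (N : ℕ) := norm_circuit_apply_sub_le (L N) (fun i => (hproj N i).isStarProjection)
    (fun i => LinearMap.IsSymmetric.isSelfAdjoint (hhsa N i)) (hcomm N) (hA N).le
  refine squeeze_zero (fun N => norm_nonneg _) hbound ?_
  simpa using hlim.sqrt.const_mul (2 * D : ℝ)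

/-- **Proposition 2 of the paper** (standard scarred-sequence setting): `A_N` is an asymptotic
fixed point of any finite-depth circuit `U_N = exp(i H_N^{(D)}) ∘ ⋯ ∘ exp(i H_N^{(1)})` whose
layer Hamiltonians `H_N^{(ℓ)} = ∑_{i ∈ L_{N,ℓ}} P_{N,i} ∘ h_{N,i} ∘ P_{N,i}` are built from
uniformly bounded self-adjoint local generators, with pairwise disjoint supports within each
layer. -/
theorem circuit_asymptotically_fixes
    (d K C : ℕ) (hd : 2 ≤ d)
    (M : ℕ → ℕ) (I : ℕ → Type) [∀ N, Fintype (I N)] [∀ N, DecidableEq (I N)]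
    (X : ∀ N, I N → Finset (Fin (M N)))
    (P : ∀ N, (i : I N) → QuditSpace d (M N) →L[ℂ] QuditSpace d (M N))
    (A : ∀ N, QuditSpace d (M N))
    (hK : ∀ N (i : I N), (X N i).card ≤ K)
    (hC : ∀ N (i : I N),
      (Finset.univ.filter fun i' : I N => i' ≠ i ∧ (X N i ∩ X N i').Nonempty).card ≤ C)
    (hproj : ∀ N (i : I N), IsOrthProj (P N i))
    (hsupp : ∀ N (i : I N), SupportedOn (X N i) (P N i))
    (hA : ∀ N, ‖A N‖ = 1)
    (hlim : Tendsto (fun N => ‖(∑ i : I N, P N i) (A N)‖) atTop (nhds 0))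
    (Ch : ℝ) (hCh : 0 ≤ Ch)
    (h : ∀ N, (i : I N) → QuditSpace d (M N) →L[ℂ] QuditSpace d (M N))
    (hhsa : ∀ N (i : I N), ∀ v w : QuditSpace d (M N),
      (inner ℂ ((h N i) v) w : ℂ) = inner ℂ v ((h N i) w))
    (hhsupp : ∀ N (i : I N), SupportedOn (X N i) (h N i))
    (hhnorm : ∀ N (i : I N), ‖h N i‖ ≤ Ch)
    (D : ℕ) (L : ∀ N, Fin D → Finset (I N))
    (hLdisj : ∀ N (ℓ : Fin D), ∀ i ∈ L N ℓ, ∀ i' ∈ L N ℓ, i ≠ i' → Disjoint (X N i) (X N i'))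
 :
    Tendsto (fun N =>
        ‖(((List.ofFn fun ℓ : Fin D =>
          NormedSpace.exp (Complex.I •
            (∑ i ∈ L N ℓ, (P N i) ∘L (h N i) ∘L (P N i)))).reverse).prod) (A N) - A N‖)
      atTop (nhds 0) :=
  circuit_asymptotically_fixes_general d M I X P A hproj hsupp hA hlim h hhsa D L hLdisj
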